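/- arXiv:2205.00762 — 2 statements merged into one kernel-verified Lean document; each statement's English description precedes it below -/
import Mathlib

section
/- If c is a superirredundant clause of a CNF formula F, then c is contained in every CNF formula that is equivalent to F and of minimal size among the formulae equivalent to F. -/
/-- A literal is a propositional variable (indexed by ℕ) with a sign. -/
abbrev Lit : Type := ℕ × Bool

/-- The complementary literal. -/
def negLit (l : Lit) : Lit := (l.1, !l.2)

/-- A clause is a finite set of literals. -/
abbrev Clause : Type := Finset Lit

/-- A clause is non-tautological: it contains no literal together with its complement. -/
def NonTauto (c : Clause) : Prop := ∀ l ∈ c, negLit l ∉ c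

/-- A CNF formula is a finite set of non-tautological clauses. -/
def IsCNF (F : Finset Clause) : Prop := ∀ c ∈ F, NonTauto c

/-- `Resolvent C D E`: the clauses `C = c₁ ∪ {x}` and `D = c₂ ∪ {¬x}` resolve on the
variable `x` into `E = c₁ ∪ c₂`, all three clauses being non-tautological. -/
def Resolvent (C D E : Clause) : Prop :=
  ∃ (x : ℕ) (c₁ c₂ : Clause),
    (x, true) ∉ c₁ ∧ (x, false) ∉ c₂ ∧
    NonTauto (insert (x, true) c₁) ∧ NonTauto (insert (x, false) c₂) ∧
    NonTauto (c₁ ∪ c₂) ∧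
    C = insert (x, true) c₁ ∧ D = insert (x, false) c₂ ∧ E = c₁ ∪ c₂

/-- The resolution closure of a formula: the smallest set of clauses containing `F`
and closed under resolution. -/
inductive ResCn (F : Finset Clause) : Clause → Prop
  | base {c : Clause} : c ∈ F → ResCn F c
  | step {C D E : Clause} : ResCn F C → ResCn F D → Resolvent C D E → ResCn F E

/-- A valuation satisfies a clause if it makes some literal of it true. -/
def satClause (v : ℕ → Bool) (c : Clause) : Prop := ∃ l ∈ c, v l.1 = l.2

/-- A valuation satisfies a set of clauses if it satisfies every clause in it. -/
def satSet (v : ℕ → Bool) (G : Set Clause) : Prop := ∀ c ∈ G, satClause v c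

/-- A set of clauses entails a clause: every valuation satisfying the set satisfies
the clause. -/
def entailsC (G : Set Clause) (c : Clause) : Prop :=
  ∀ v : ℕ → Bool, satSet v G → satClause v c

/-- A formula entails a formula. -/
def entailsF (F G : Finset Clause) : Prop :=
  ∀ v : ℕ → Bool, satSet v (↑F : Set Clause) → satSet v (↑G : Set Clause)

/-- Two formulae are equivalent if they are satisfied by the same valuations. -/
def equivF (F G : Finset Clause) : Prop :=
  ∀ v : ℕ → Bool, satSet v (↑F : Set Clause) ↔ satSet v (↑G : Set Clause)

/-- A clause `c` of `F` is superredundant in `F` if `ResCn(F) \ {c} ⊨ c`. -/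
def SuperRedundant (F : Finset Clause) (c : Clause) : Prop :=
  entailsC ({d | ResCn F d} \ {c}) c

/-- The size of a formula: the total number of literal occurrences in it. -/
def size (F : Finset Clause) : ℕ := ∑ c ∈ F, c.card

/-- The set of variables occurring (positively or negatively) in a formula. -/
def varsF (F : Finset Clause) : Set ℕ := {n | ∃ c ∈ F, ∃ b : Bool, (n, b) ∈ c}

section Aux

lemma nonTauto_subset {c d : Clause} (h : c ⊆ d) (hd : NonTauto d) : NonTauto c :=
  fun l hl hn => hd l (h hl) (h hn)

lemma resCn_nonTauto {F : Finset Clause} (hF : IsCNF F) {e : Clause} (h : ResCn F e) :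
    NonTauto e := by
  induction h with
  | base h => exact hF _ h
  | step _ _ hres _ _ =>
    obtain ⟨x, c₁, c₂, _, _, _, _, hE, _, _, rfl⟩ := hres
    exact hE

lemma resCn_lits {G : Finset Clause} {e : Clause} (h : ResCn G e) :
    ∀ l ∈ e, ∃ c ∈ G, l ∈ c := by
  induction h with
  | base h => exact fun l hl => ⟨_, h, hl⟩
  | step _ _ hres ih1 ih2 =>
    obtain ⟨x, c₁, c₂, _, _, _, _, _, rfl, rfl, rfl⟩ := hres
    intro l hl
    rcases Finset.mem_union.1 hl with h | h
    · exact ih1 l (Finset.mem_insert_of_mem h)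
    · exact ih2 l (Finset.mem_insert_of_mem h)

lemma satClause_subset {v : ℕ → Bool} {c d : Clause} (h : c ⊆ d) (hc : satClause v c) :
    satClause v d := by
  obtain ⟨l, hl, hv⟩ := hc
  exact ⟨l, h hl, hv⟩

lemma resolvent_erase {A B : Clause} (y : ℕ) (hA : (y, true) ∈ A) (hB : (y, false) ∈ B)
    (hAn : NonTauto A) (hBn : NonTauto B)
    (hE : NonTauto (A.erase (y, true) ∪ B.erase (y, false))) :
    Resolvent A B (A.erase (y, true) ∪ B.erase (y, false)) := by
  refine ⟨y, A.erase (y, true), B.erase (y, false), Finset.notMem_erase _ _,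
    Finset.notMem_erase _ _, ?_, ?_, hE, ?_, ?_, rfl⟩
  · rw [Finset.insert_erase hA]; exact hAn
  · rw [Finset.insert_erase hB]; exact hBn
  · rw [Finset.insert_erase hA]
  · rw [Finset.insert_erase hB]

/-- Restriction of a formula by setting variable `x` to value `b`. -/
def restrict (x : ℕ) (b : Bool) (F : Finset Clause) : Finset Clause :=
  (F.filter (fun c => (x, b) ∉ c)).image (fun c => c.erase (x, !b))

lemma mem_restrict {x : ℕ} {b : Bool} {F : Finset Clause} {e : Clause} :
    e ∈ restrict x b F ↔ ∃ c ∈ F, (x, b) ∉ c ∧ e = c.erase (x, !b) := by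
  simp only [restrict, Finset.mem_image, Finset.mem_filter]
  constructor
  · rintro ⟨c, ⟨hc, hn⟩, rfl⟩; exact ⟨c, hc, hn, rfl⟩
  · rintro ⟨c, hc, hn, rfl⟩; exact ⟨c, ⟨hc, hn⟩, rfl⟩

lemma restrict_no_x {x : ℕ} {b : Bool} {F : Finset Clause} {e : Clause}
    (he : e ∈ restrict x b F) : ∀ bb : Bool, (x, bb) ∉ e := by
  obtain ⟨c, _, hn, rfl⟩ := mem_restrict.1 he
  intro bb hbb
  rcases Finset.mem_erase.1 hbb with ⟨hne, hmem⟩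
  have : bb = b := by
    cases bb <;> cases b <;> simp_all
  exact hn (this ▸ hmem)

end Aux
section Lift

lemma resCn_restrict_no_x {x : ℕ} {b : Bool} {F : Finset Clause} {e : Clause}
    (he : ResCn (restrict x b F) e) : ∀ bb : Bool, (x, bb) ∉ e := by
  intro bb hbb
  obtain ⟨c, hc, hl⟩ := resCn_lits he _ hbb
  exact restrict_no_x hc bb hl

lemma lift_lemma {F : Finset Clause} (hF : IsCNF F) (x : ℕ) (b : Bool) :
    ∀ e, ResCn (restrict x b F) e → ∃ e', ResCn F e' ∧ e' ⊆ insert (x, !b) e := by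
  intro e he
  induction he with
  | base h =>
    obtain ⟨c, hc, hn, rfl⟩ := mem_restrict.1 h
    refine ⟨c, ResCn.base hc, fun l hl => ?_⟩
    by_cases hlb : l = (x, !b)
    · exact hlb ▸ Finset.mem_insert_self _ _
    · exact Finset.mem_insert_of_mem (Finset.mem_erase.2 ⟨hlb, hl⟩)
  | @step C D E hC hD hres ihC ihD =>
    obtain ⟨y, c₁, c₂, hy1, hy2, hCn, hDn, hEn, rfl, rfl, rfl⟩ := hres
    obtain ⟨C', hC', hCsub⟩ := ihC
    obtain ⟨D', hD', hDsub⟩ := ihD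
    have hyx : y ≠ x := by
      intro h; subst h
      exact resCn_restrict_no_x hC true (Finset.mem_insert_self _ _)
    -- E = c₁ ∪ c₂ contains no x-literal
    have hEx : ∀ bb : Bool, (x, bb) ∉ c₁ ∪ c₂ := by
      intro bb hbb
      rcases Finset.mem_union.1 hbb with h | h
      · exact resCn_restrict_no_x hC bb (Finset.mem_insert_of_mem h)
      · exact resCn_restrict_no_x hD bb (Finset.mem_insert_of_mem h)
    have hInsE : NonTauto (insert (x, !b) (c₁ ∪ c₂)) := by
      rintro ⟨n, bb⟩ hl hnl
      simp only [negLit] at hnl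
      rcases Finset.mem_insert.1 hl with h1 | h1 <;>
        rcases Finset.mem_insert.1 hnl with h2 | h2
      · simp only [Prod.mk.injEq] at h1 h2
        obtain ⟨rfl, rfl⟩ := h1
        cases b <;> simp_all
      · simp only [Prod.mk.injEq] at h1
        obtain ⟨rfl, rfl⟩ := h1
        exact hEx _ h2
      · simp only [Prod.mk.injEq] at h2
        obtain ⟨rfl, h2b⟩ := h2
        have hbb : bb = b := by cases bb <;> cases b <;> simp_all
        subst hbb
        exact hEx _ h1
      · exact hEn _ h1 (by simp only [negLit]; exact h2)
    by_cases hy1' : (y, true) ∈ C'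
    · by_cases hy2' : (y, false) ∈ D'
      · -- resolve C' and D' on y
        have hCn' : NonTauto C' := resCn_nonTauto hF hC'
        have hDn' : NonTauto D' := resCn_nonTauto hF hD'
        have hsub : C'.erase (y, true) ∪ D'.erase (y, false) ⊆ insert (x, !b) (c₁ ∪ c₂) := by
          intro l hl
          rcases Finset.mem_union.1 hl with h | h
          · rcases Finset.mem_erase.1 h with ⟨hne, hmem⟩
            rcases Finset.mem_insert.1 (hCsub hmem) with rfl | hh
            · exact Finset.mem_insert_self _ _
            · rcases Finset.mem_insert.1 hh with rfl | hh
              · exact absurd rfl hne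
              · exact Finset.mem_insert_of_mem (Finset.mem_union_left _ hh)
          · rcases Finset.mem_erase.1 h with ⟨hne, hmem⟩
            rcases Finset.mem_insert.1 (hDsub hmem) with rfl | hh
            · exact Finset.mem_insert_self _ _
            · rcases Finset.mem_insert.1 hh with rfl | hh
              · exact absurd rfl hne
              · exact Finset.mem_insert_of_mem (Finset.mem_union_right _ hh)
        have hEn' : NonTauto (C'.erase (y, true) ∪ D'.erase (y, false)) :=
          nonTauto_subset hsub hInsE
        exact ⟨_, ResCn.step hC' hD' (resolvent_erase y hy1' hy2' hCn' hDn' hEn'), hsub⟩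
      · -- D' avoids (y, false), so D' ⊆ insert (x,!b) (c₁ ∪ c₂)
        refine ⟨D', hD', fun l hl => ?_⟩
        rcases Finset.mem_insert.1 (hDsub hl) with rfl | hh
        · exact Finset.mem_insert_self _ _
        · rcases Finset.mem_insert.1 hh with rfl | hh
          · exact absurd hl hy2'
          · exact Finset.mem_insert_of_mem (Finset.mem_union_right _ hh)
    · refine ⟨C', hC', fun l hl => ?_⟩
      rcases Finset.mem_insert.1 (hCsub hl) with rfl | hh
      · exact Finset.mem_insert_self _ _
      · rcases Finset.mem_insert.1 hh with rfl | hh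
        · exact absurd hl hy1'
        · exact Finset.mem_insert_of_mem (Finset.mem_union_left _ hh)

end Lift
section Restrict

lemma sat_restrict_extend {x : ℕ} {b : Bool} {F : Finset Clause}
    {v : ℕ → Bool} (hv : satSet v ↑(restrict x b F)) :
    satSet (fun n => if n = x then b else v n) ↑F := by
  intro c hc
  by_cases hxc : (x, b) ∈ c
  · exact ⟨(x, b), hxc, by simp⟩
  · have hmem : c.erase (x, !b) ∈ restrict x b F := mem_restrict.2 ⟨c, hc, hxc, rfl⟩
    obtain ⟨l, hl, hvl⟩ := hv _ (Finset.mem_coe.2 hmem)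
    rcases Finset.mem_erase.1 hl with ⟨hne, hm⟩
    have hlx : l.1 ≠ x := by
      obtain ⟨n, lb⟩ := l
      rintro rfl
      have : lb = b := by
        by_contra h
        exact hne (by cases lb <;> cases b <;> simp_all)
      exact hxc (this ▸ hm)
    exact ⟨l, hm, by simp only [if_neg hlx]; exact hvl⟩

lemma entails_restrict_of_mem {F : Finset Clause} {d : Clause} {x : ℕ} {bd : Bool}
    (hd : NonTauto d) (hxd : (x, bd) ∈ d) (hent : entailsC ↑F d) :
    entailsC ↑(restrict x (!bd) F) (d.erase (x, bd)) := by
  intro v hv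
  obtain ⟨l, hl, hvl⟩ := hent _ (sat_restrict_extend (x := x) (b := !bd) hv)
  have hlx : l.1 ≠ x := by
    obtain ⟨n, lb⟩ := l
    rintro rfl
    simp only [if_pos rfl] at hvl
    by_cases hlb : lb = bd
    · subst hlb
      exact absurd hvl (by cases lb <;> simp)
    · have h2 : lb = !bd := by cases lb <;> cases bd <;> simp_all
      exact hd (n, bd) hxd (by simp only [negLit]; exact h2 ▸ hl)
  refine ⟨l, Finset.mem_erase.2 ⟨?_, hl⟩, ?_⟩
  · intro h; exact hlx (by rw [h])
  · simp only [if_neg hlx] at hvl; exact hvl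

lemma entails_restrict_of_notMem {F : Finset Clause} {d : Clause} {x : ℕ} (b : Bool)
    (hxd : ∀ bb : Bool, (x, bb) ∉ d) (hent : entailsC ↑F d) :
    entailsC ↑(restrict x b F) d := by
  intro v hv
  obtain ⟨l, hl, hvl⟩ := hent _ (sat_restrict_extend (x := x) (b := b) hv)
  have hlx : l.1 ≠ x := by
    obtain ⟨n, lb⟩ := l
    rintro rfl
    exact hxd lb hl
  refine ⟨l, hl, ?_⟩
  simp only [if_neg hlx] at hvl; exact hvl

end Restrict
section Subsumption

lemma bool_eq_not {a b : Bool} (h : a ≠ b) : a = !b := by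
  cases a <;> cases b <;> simp_all

lemma subsumption (S : Finset ℕ) :
    ∀ (F : Finset Clause) (d : Clause), IsCNF F → NonTauto d →
    (∀ c ∈ F, ∀ l ∈ c, l.1 ∈ S) → (∀ l ∈ d, l.1 ∈ S) → entailsC ↑F d →
    ∃ d', ResCn F d' ∧ d' ⊆ d := by
  induction S using Finset.induction_on with
  | empty =>
    intro F d hF hd hvF hvd hent
    by_cases hF0 : (∅ : Clause) ∈ F
    · exact ⟨∅, ResCn.base hF0, Finset.empty_subset d⟩
    · exfalso
      have hFe : F = ∅ := by
        by_contra h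
        obtain ⟨c, hc⟩ := Finset.nonempty_iff_ne_empty.2 h
        have hce : c = ∅ := Finset.eq_empty_of_forall_notMem
          (fun l hl => absurd (hvF c hc l hl) (Finset.notMem_empty _))
        exact hF0 (hce ▸ hc)
      have hde : d = ∅ := Finset.eq_empty_of_forall_notMem
        (fun l hl => absurd (hvd l hl) (Finset.notMem_empty _))
      obtain ⟨l, hl, _⟩ := hent (fun _ => true) (by intro c hc; simp [hFe] at hc)
      exact absurd hl (hde ▸ Finset.notMem_empty l)
  | @insert x S hx ih =>
    intro F d hF hd hvF hvd hent
    have hvR : ∀ b : Bool, ∀ c ∈ restrict x b F, ∀ l ∈ c, l.1 ∈ S := by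
      intro b c hc l hl
      obtain ⟨c0, hc0, hnb, rfl⟩ := mem_restrict.1 hc
      rcases Finset.mem_erase.1 hl with ⟨hne, hm⟩
      have h1 : l.1 ∈ insert x S := hvF c0 hc0 l hm
      have hlx : l.1 ≠ x := by
        obtain ⟨n, lb⟩ := l
        show n ≠ x
        rintro rfl
        by_cases hlb : lb = b
        · exact hnb (hlb ▸ hm)
        · exact hne (by rw [bool_eq_not hlb])
      exact (Finset.mem_insert.1 h1).resolve_left hlx
    have hRcnf : ∀ b, IsCNF (restrict x b F) := by
      intro b c hc
      obtain ⟨c0, hc0, _, rfl⟩ := mem_restrict.1 hc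
      exact nonTauto_subset (Finset.erase_subset _ _) (hF c0 hc0)
    by_cases hxd : ∃ bd : Bool, (x, bd) ∈ d
    · obtain ⟨bd, hbd⟩ := hxd
      have hent' := entails_restrict_of_mem hd hbd hent
      have hvd' : ∀ l ∈ d.erase (x, bd), l.1 ∈ S := by
        intro l hl
        rcases Finset.mem_erase.1 hl with ⟨hne, hm⟩
        have h1 : l.1 ∈ insert x S := hvd l hm
        have hlx : l.1 ≠ x := by
          obtain ⟨n, lb⟩ := l
          show n ≠ x
          rintro rfl
          by_cases hlb : lb = bd
          · exact hne (by rw [hlb])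
          · exact hd (n, bd) hbd (by simp only [negLit]; exact (bool_eq_not hlb) ▸ hm)
        exact (Finset.mem_insert.1 h1).resolve_left hlx
      obtain ⟨d₀, hd₀, hsub₀⟩ := ih (restrict x (!bd) F) (d.erase (x, bd)) (hRcnf _)
        (nonTauto_subset (Finset.erase_subset _ _) hd) (hvR _) hvd' hent'
      obtain ⟨d', hd', hsub'⟩ := lift_lemma hF x (!bd) d₀ hd₀
      rw [Bool.not_not] at hsub'
      refine ⟨d', hd', fun l hl => ?_⟩
      rcases Finset.mem_insert.1 (hsub' hl) with rfl | h
      · exact hbd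
      · exact Finset.mem_of_mem_erase (hsub₀ h)
    · push_neg at hxd
      have hvd0 : ∀ l ∈ d, l.1 ∈ S := by
        intro l hl
        have h1 := hvd l hl
        have hlx : l.1 ≠ x := by
          obtain ⟨n, lb⟩ := l
          show n ≠ x
          rintro rfl
          exact hxd lb hl
        exact (Finset.mem_insert.1 h1).resolve_left hlx
      obtain ⟨d₁, hd₁, hs₁⟩ := ih (restrict x true F) d (hRcnf _) hd (hvR _) hvd0
        (entails_restrict_of_notMem true hxd hent)
      obtain ⟨d₂, hd₂, hs₂⟩ := ih (restrict x false F) d (hRcnf _) hd (hvR _) hvd0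
        (entails_restrict_of_notMem false hxd hent)
      obtain ⟨d₁', hd₁', hs₁'⟩ := lift_lemma hF x true d₁ hd₁
      obtain ⟨d₂', hd₂', hs₂'⟩ := lift_lemma hF x false d₂ hd₂
      rw [Bool.not_true] at hs₁'
      rw [Bool.not_false] at hs₂'
      by_cases hx1 : (x, false) ∈ d₁'
      · by_cases hx2 : (x, true) ∈ d₂'
        · have hsubE : d₂'.erase (x, true) ∪ d₁'.erase (x, false) ⊆ d := by
            intro l hl
            rcases Finset.mem_union.1 hl with h | h
            · rcases Finset.mem_erase.1 h with ⟨hne, hm⟩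
              rcases Finset.mem_insert.1 (hs₂' hm) with rfl | hh
              · exact absurd rfl hne
              · exact hs₂ hh
            · rcases Finset.mem_erase.1 h with ⟨hne, hm⟩
              rcases Finset.mem_insert.1 (hs₁' hm) with rfl | hh
              · exact absurd rfl hne
              · exact hs₁ hh
          have hEn := nonTauto_subset hsubE hd
          exact ⟨_, ResCn.step hd₂' hd₁'
            (resolvent_erase x hx2 hx1 (resCn_nonTauto hF hd₂') (resCn_nonTauto hF hd₁') hEn),
            hsubE⟩
        · refine ⟨d₂', hd₂', fun l hl => ?_⟩
          rcases Finset.mem_insert.1 (hs₂' hl) with rfl | hh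
          · exact absurd hl hx2
          · exact hs₂ hh
      · refine ⟨d₁', hd₁', fun l hl => ?_⟩
        rcases Finset.mem_insert.1 (hs₁' hl) with rfl | hh
        · exact absurd hl hx1
        · exact hs₁ hh

end Subsumption
/-- a superirredundant clause of `F` is contained in every minimal-size CNF
formula equivalent to `F`. -/
theorem superirredundant_mem_minimal
    (F : Finset Clause) (hF : IsCNF F) (c : Clause) (hc : c ∈ F)
    (hirr : ¬ SuperRedundant F c)
    (B : Finset Clause) (hB : IsCNF B) (hequiv : equivF F B)
    (hmin : ∀ B' : Finset Clause, IsCNF B' → equivF F B' → size B ≤ size B') :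
    c ∈ B := by
  by_contra hcB
  by_cases hex : ∃ d ∈ B, c ⊆ d
  · obtain ⟨d, hdB, hcd⟩ := hex
    have hne : c ≠ d := fun h => hcB (h ▸ hdB)
    have hclt : c.card < d.card :=
      Finset.card_lt_card ⟨hcd, fun h => hne (Finset.Subset.antisymm hcd h)⟩
    have hcE : c ∉ B.erase d := fun h => hcB (Finset.mem_of_mem_erase h)
    set B' := insert c (B.erase d) with hB'
    have hCNF' : IsCNF B' := by
      intro e he
      rcases Finset.mem_insert.1 he with he | he
      · exact he ▸ hF c hc
      · exact hB e (Finset.mem_of_mem_erase he)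
    have hequiv' : equivF F B' := by
      intro v
      constructor
      · intro hvF e he
        rcases Finset.mem_insert.1 (Finset.mem_coe.1 he) with he2 | he2
        · exact he2 ▸ hvF c (Finset.mem_coe.2 hc)
        · exact (hequiv v).1 hvF _ (Finset.mem_coe.2 (Finset.mem_of_mem_erase he2))
      · intro hvB'
        apply (hequiv v).2
        intro e he
        by_cases hed : e = d
        · subst hed
          exact satClause_subset hcd (hvB' c (Finset.mem_coe.2 (Finset.mem_insert_self _ _)))
        · exact hvB' e
            (Finset.mem_coe.2 (Finset.mem_insert_of_mem (Finset.mem_erase.2 ⟨hed, Finset.mem_coe.1 he⟩)))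
    have h1 : size B' = c.card + ∑ e ∈ B.erase d, e.card := by
      simp only [size, hB', Finset.sum_insert hcE]
    have h2 : (∑ e ∈ B.erase d, e.card) + d.card = size B := by
      simp only [size]
      exact Finset.sum_erase_add B _ hdB
    have hge := hmin B' hCNF' hequiv'
    omega
  · apply hirr
    intro v hv
    have hvB : satSet v ↑B := by
      intro e heB
      have heB' : e ∈ B := Finset.mem_coe.1 heB
      have hFe : entailsC ↑F e := fun w hw => (hequiv w).1 hw e heB
      set S : Finset ℕ := (F.biUnion (fun cc => cc.image Prod.fst)) ∪ e.image Prod.fst with hS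
      have hvFS : ∀ cc ∈ F, ∀ l ∈ cc, l.1 ∈ S := by
        intro cc hcc l hl
        exact Finset.mem_union_left _ (Finset.mem_biUnion.2 ⟨cc, hcc, Finset.mem_image.2 ⟨l, hl, rfl⟩⟩)
      have hvdS : ∀ l ∈ e, l.1 ∈ S := fun l hl =>
        Finset.mem_union_right _ (Finset.mem_image.2 ⟨l, hl, rfl⟩)
      obtain ⟨d', hd', hsub⟩ := subsumption S F e hF (hB e heB') hvFS hvdS hFe
      have hdc : d' ≠ c := by
        rintro rfl
        exact hex ⟨e, heB', hsub⟩
      exact satClause_subset hsub (hv d' ⟨hd', hdc⟩)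
    exact (hequiv v).2 hvB c (Finset.mem_coe.2 hc)
end

section
/- Let F and F' be CNF formulae sharing no variables, with F' satisfiable, and let c be a clause of F. Then c is superredundant in F if and only if c is superredundant in F ∪ F'. -/
lemma vars_resCn {G : Finset Clause} {C : Clause} (h : ResCn G C) :
    ∀ l ∈ C, l.1 ∈ varsF G := by
  induction h with
  | base hc => intro l hl; exact ⟨_, hc, l.2, by simpa using hl⟩
  | step hC hD hres ihC ihD =>
    obtain ⟨x, c₁, c₂, -, -, -, -, -, rfl, rfl, rfl⟩ := hres
    intro l hl
    rcases Finset.mem_union.mp hl with h1 | h2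
    · exact ihC l (Finset.mem_insert_of_mem h1)
    · exact ihD l (Finset.mem_insert_of_mem h2)

lemma resCn_sound {G : Finset Clause} {v : ℕ → Bool}
    (hv : satSet v (↑G : Set Clause)) {C : Clause} (h : ResCn G C) :
    satClause v C := by
  induction h with
  | base hc => exact hv _ (by exact_mod_cast hc)
  | step hC hD hres ihC ihD =>
    obtain ⟨x, c₁, c₂, -, -, -, -, -, rfl, rfl, rfl⟩ := hres
    obtain ⟨l, hl, hvl⟩ := ihC
    rcases Finset.mem_insert.mp hl with rfl | hl1
    · obtain ⟨m, hm, hvm⟩ := ihD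
      rcases Finset.mem_insert.mp hm with rfl | hm2
      · simp only at hvl hvm; rw [hvl] at hvm; exact absurd hvm (by simp)
      · exact ⟨m, Finset.mem_union_right _ hm2, hvm⟩
    · exact ⟨l, Finset.mem_union_left _ hl1, hvl⟩

lemma resCn_mono {F G : Finset Clause} (h : F ⊆ G) {C : Clause}
    (hC : ResCn F C) : ResCn G C := by
  induction hC with
  | base hc => exact ResCn.base (h hc)
  | step _ _ hres ihC ihD => exact ResCn.step ihC ihD hres

lemma resCn_union_split {F F' : Finset Clause}
    (hdisj : ∀ n : ℕ, n ∈ varsF F → n ∉ varsF F') {C : Clause}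
    (h : ResCn (F ∪ F') C) : ResCn F C ∨ ResCn F' C := by
  induction h with
  | base hc =>
    rcases Finset.mem_union.mp hc with h | h
    · exact Or.inl (.base h)
    · exact Or.inr (.base h)
  | step hC hD hres ihC ihD =>
    have hres' := hres
    obtain ⟨x, c₁, c₂, -, -, -, -, -, hCe, hDe, -⟩ := hres'
    have hxC : ((x, true) : Lit) ∈ _ := hCe ▸ Finset.mem_insert_self (x, true) c₁
    have hxD : ((x, false) : Lit) ∈ _ := hDe ▸ Finset.mem_insert_self (x, false) c₂
    rcases ihC with h1 | h1 <;> rcases ihD with h2 | h2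
    · exact Or.inl (.step h1 h2 hres)
    · exact absurd (vars_resCn h2 _ hxD) (hdisj x (vars_resCn h1 _ hxC))
    · exact absurd (vars_resCn h1 _ hxC) (hdisj x (vars_resCn h2 _ hxD))
    · exact Or.inr (.step h1 h2 hres)

/-- adding a satisfiable formula sharing no variables with `F` does not
change superredundancy of the clauses of `F`. -/
theorem superredundant_union_separate
    (F F' : Finset Clause) (hF : IsCNF F) (hF' : IsCNF F')
    (hdisj : ∀ n : ℕ, n ∈ varsF F → n ∉ varsF F')
    (hsat : ∃ v : ℕ → Bool, satSet v (↑F' : Set Clause))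
    (c : Clause) (hc : c ∈ F) :
    SuperRedundant F c ↔ SuperRedundant (F ∪ F') c := by
  classical
  obtain ⟨w, hw⟩ := hsat
  have hcvars : ∀ l ∈ c, l.1 ∈ varsF F := vars_resCn (ResCn.base hc)
  constructor
  · intro h v hv
    exact h v (fun d hd =>
      hv d ⟨resCn_mono Finset.subset_union_left hd.1, hd.2⟩)
  · intro h v hv
    set u : ℕ → Bool := fun n => if n ∈ varsF F' then w n else v n with hu
    have husat : satSet u ({d | ResCn (F ∪ F') d} \ {c}) := by
      intro d hd
      rcases resCn_union_split hdisj hd.1 with h1 | h1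
      · obtain ⟨l, hl, hvl⟩ := hv d ⟨h1, hd.2⟩
        refine ⟨l, hl, ?_⟩
        have : l.1 ∉ varsF F' := hdisj l.1 (vars_resCn h1 l hl)
        simp [hu, this, hvl]
      · obtain ⟨l, hl, hvl⟩ := resCn_sound hw h1
        refine ⟨l, hl, ?_⟩
        have : l.1 ∈ varsF F' := vars_resCn h1 l hl
        simp [hu, this, hvl]
    obtain ⟨l, hl, hvl⟩ := h u husat
    refine ⟨l, hl, ?_⟩
    have hn : l.1 ∉ varsF F' := hdisj l.1 (hcvars l hl)
    simpa [hu, hn] using hvl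
end
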